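/- Let a_{ij} ∈ ℂ and h_{ij} ∈ ℂ be given for every edge (i,j) ∈ E, and let Δ be the n×n complex matrix with Δ_{ij} = −h_{ij} a_{ij} for i ≠ j and Δ_{ii} = Σ_{j≠i} a_{ij}. Then the ordinary determinant of the top-left m×m principal submatrix satisfies det Δ_[m] = Σ_{F ∈ ℱ→_m} a_F · ∏_{c ∈ 𝒞(F)} (1 − h_c). -/

import Mathlib

/-!
Forman's matrix-tree theorem with complex holonomies along the edges:
`det Δ_[m] = Σ_{F ∈ ℱ→_m} a_F ∏_{c ∈ 𝒞(F)} (1 - h_c)`.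
-/

open Finset Function

/-- Ordered product of the edge values along the path `x, g x, g^[2] x, …, g^[r] x`. -/
def pathProd {V H : Type*} [Ring H] (h : V → V → H) (g : V → V) (x : V) (r : ℕ) : H :=
  ((List.range r).map fun t => h (g^[t] x) (g^[t + 1] x)).prod

/-- `x` is the canonical (`enc`-minimal) point on a nontrivial cycle of `g`. -/
def IsCycleRep {V : Type*} (enc : V → ℕ) (g : V → V) (x : V) : Prop :=
  2 ≤ minimalPeriod g x ∧ ∀ t : ℕ, enc x ≤ enc (g^[t] x)

/-- The canonical representatives of the (nontrivial) cycles of `g`. -/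
noncomputable def cycleReps {V : Type*} [Fintype V] (enc : V → ℕ) (g : V → V) : Finset V :=
  @Finset.filter V (IsCycleRep enc g) (Classical.decPred _) Finset.univ

/-- Extension of `f : U → V` to all of `V = {1,…,n}`, fixing the well pointwise. -/
def extFun {n m : ℕ} (hmn : m ≤ n) (f : Fin m → Fin n) : Fin n → Fin n :=
  fun j => if h : (j : ℕ) < m then f ⟨(j : ℕ), h⟩ else j

/-!
Expanding each row of `Δ_[m]` over the out-edges of its vertex gives
`det Δ_[m] = Σ_F a_F det (1 - Q_F)`, where `Q_F` is the holonomy-weighted adjacency matrix of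
the functional graph of `F` (well vertices fixed, loops dropped). Key the vertices by the size
of their forward orbit (decreasing) and then by the smallest label on it. The map never
decreases this key, keeps it exactly at periodic points, and the vertices sharing the key of a
cycle are that cycle. Hence `1 - Q_F` is block triangular; the block of a nontrivial cycle `c`
is a weighted cyclic shift with determinant `1 - h_c`, and every other block is an identity.
-/

open Matrix

def funGraphMatrix {α R : Type*} [DecidableEq α] [Zero R] (g : α → α) (w : α → α → R) :
    Matrix α α R :=
  of fun i j => if g i = j ∧ i ≠ j then w i j else 0

theorem funGraphMatrix_submatrix {α β R : Type*} [DecidableEq α] [DecidableEq β] [Zero R]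
    {g : α → α} {σ : β → β} {f : β → α} (hf : Injective f) (hfσ : ∀ i, g (f i) = f (σ i))
    (w : α → α → R) :
    (funGraphMatrix g w).submatrix f f = funGraphMatrix σ fun i j => w (f i) (f j) := by
  ext i j
  simp [funGraphMatrix, hfσ, hf.eq_iff]

theorem submatrix_one_sub_funGraphMatrix {α β R : Type*} [DecidableEq α] [DecidableEq β]
    [Ring R] {ι : β → α} (hι : Injective ι) {g : α → α}
    (hg : ∀ i, g (ι i) ≠ ι i) (w : α → α → R) :
    (1 - funGraphMatrix g w).submatrix ι ι =
      1 - of fun i j => if g (ι i) = ι j then w (ι i) (ι j) else 0 := by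
  ext i j
  have hcond : g (ι i) = ι j ∧ ι i ≠ ι j ↔ g (ι i) = ι j :=
    and_iff_left_of_imp fun hj => hj ▸ (hg i).symm
  simp only [Matrix.sub_apply, submatrix_apply, one_apply, hι.eq_iff, funGraphMatrix, of_apply,
    if_congr hcond rfl rfl]

theorem det_one_sub_funGraphMatrix_finRotate {R : Type*} [CommRing R] {p : ℕ} (hp : 2 ≤ p)
    (w : Fin p → Fin p → R) :
    det (1 - funGraphMatrix (finRotate p) w) = 1 - ∏ i, w i (finRotate p i) := by
  obtain ⟨r, rfl⟩ : ∃ r, p = r + 2 := ⟨p - 2, by omega⟩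
  set A : Matrix (Fin (r + 2)) (Fin (r + 2)) R := 1 - funGraphMatrix (finRotate _) w
  have hA : ∀ i j, A i j = (if i = j then 1 else 0) - if i + 1 = j then w i j else 0 := by
    intro i j
    have hne : i ≠ i + 1 := by simp
    simp only [A, Matrix.sub_apply, one_apply, funGraphMatrix, of_apply, finRotate_apply]
    exact congrArg _ (if_congr (and_iff_left_of_imp fun h => h ▸ hne) rfl rfl)
  have hupper : det (A.submatrix Fin.castSucc Fin.castSucc) = 1 := by
    rw [det_of_isUpperTriangular]
    · refine prod_eq_one fun i _ => ?_
      simp [hA, Fin.coeSucc_eq_succ, Fin.ext_iff]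
    · intro i j hji
      have : (j : ℕ) < i := hji
      simp only [submatrix_apply, hA, Fin.coeSucc_eq_succ, Fin.ext_iff, Fin.val_succ,
        Fin.val_castSucc]
      rw [if_neg (by omega), if_neg (by omega), sub_zero]
  have hlower :
      det (A.submatrix Fin.castSucc Fin.succ) = ∏ i : Fin (r + 1), -w i.castSucc i.succ := by
    rw [det_of_isLowerTriangular]
    · refine prod_congr rfl fun i _ => ?_
      simp [hA, Fin.coeSucc_eq_succ, Fin.ext_iff]
    · intro i j hij
      have : (i : ℕ) < j := hij
      simp only [submatrix_apply, hA, Fin.coeSucc_eq_succ, Fin.ext_iff, Fin.val_succ,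
        Fin.val_castSucc]
      rw [if_neg (by omega), if_neg (by omega), sub_zero]
  have hlast : A (Fin.last _) (Fin.last _) = 1 := by simp [hA]
  have hzero : A (Fin.last _) 0 = -w (Fin.last _) 0 := by simp [hA, Fin.ext_iff]
  have hrot (i : Fin (r + 1)) : finRotate _ i.castSucc = i.succ := by simp [Fin.coeSucc_eq_succ]
  -- Laplace expansion along the last row, whose only nonzero entries are in columns `last` and `0`
  rw [det_succ_row A (Fin.last _), Fintype.sum_eq_add (Fin.last _) 0 (by simp [Fin.ext_iff]),
    Fin.prod_univ_castSucc, finRotate_last]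
  · simp only [Fin.succAbove_last, Fin.succAbove_zero, hupper, hlower, hlast, hzero, hrot,
      Fin.val_last, Fin.val_zero, prod_neg, card_univ, Fintype.card_fin]
    have hsq : ((-1 : R) ^ (r + 1)) ^ 2 = 1 := by
      rw [← pow_mul, mul_comm, pow_mul, neg_one_sq, one_pow]
    linear_combination (1 - w (Fin.last _) 0 * ∏ i : Fin (r + 1), w i.castSucc i.succ) * hsq
  · rintro j ⟨hj, hj0⟩
    rw [hA, if_neg (Ne.symm hj), if_neg (by simpa using Ne.symm hj0)]
    simp

theorem IsCycleRep.mem_periodicPts {α : Type*} {enc : α → ℕ} {g : α → α} {x : α}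
    (hx : IsCycleRep enc g x) : x ∈ periodicPts g :=
  minimalPeriod_pos_iff_mem_periodicPts.1 (by have := hx.1; omega)

theorem pathProd_eq_prod_range {V H : Type*} [CommRing H] (h : V → V → H) (g : V → V) (x : V)
    (r : ℕ) : pathProd h g x r = ∏ t ∈ range r, h (g^[t] x) (g^[t + 1] x) := by
  induction r with
  | zero => simp [pathProd]
  | succ r ih =>
    rw [pathProd, List.range_succ, List.map_append, List.prod_append, prod_range_succ, ← pathProd,
      ih]
    simp

section ForwardOrbit

variable {α : Type*} [Fintype α]

open Classical in
noncomputable def forwardOrbit (g : α → α) (x : α) : Finset α :=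
  univ.filter fun y => ∃ t, g^[t] x = y

variable {g : α → α} {x y : α}

theorem mem_forwardOrbit : y ∈ forwardOrbit g x ↔ ∃ t, g^[t] x = y := by
  simp [forwardOrbit]

theorem iterate_mem_forwardOrbit (t : ℕ) : g^[t] x ∈ forwardOrbit g x :=
  mem_forwardOrbit.2 ⟨t, rfl⟩

theorem forwardOrbit_subset_of_mem (hy : y ∈ forwardOrbit g x) :
    forwardOrbit g y ⊆ forwardOrbit g x := by
  obtain ⟨t, rfl⟩ := mem_forwardOrbit.1 hy
  intro z hz
  obtain ⟨s, rfl⟩ := mem_forwardOrbit.1 hz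
  rw [← iterate_add_apply]
  exact iterate_mem_forwardOrbit _

theorem forwardOrbit_eq_of_mem (hx : x ∈ periodicPts g) (hy : y ∈ forwardOrbit g x) :
    forwardOrbit g y = forwardOrbit g x := by
  refine (forwardOrbit_subset_of_mem hy).antisymm (forwardOrbit_subset_of_mem ?_)
  obtain ⟨t, rfl⟩ := mem_forwardOrbit.1 hy
  have hle : t ≤ minimalPeriod g x * t :=
    Nat.le_mul_of_pos_left t (minimalPeriod_pos_of_mem_periodicPts hx)
  refine mem_forwardOrbit.2 ⟨minimalPeriod g x * t - t, ?_⟩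
  rw [← iterate_add_apply, Nat.sub_add_cancel hle]
  exact ((isPeriodicPt_minimalPeriod g x).mul_const t).eq

theorem mem_periodicPts_of_mem_forwardOrbit_apply (hx : x ∈ forwardOrbit g (g x)) :
    x ∈ periodicPts g := by
  obtain ⟨t, ht⟩ := mem_forwardOrbit.1 hx
  exact mk_mem_periodicPts t.succ_pos ht

noncomputable def orbitKey (enc : α → ℕ) (g : α → α) (x : α) : Lex (ℕᵒᵈ × WithTop ℕ) :=
  toLex (OrderDual.toDual #(forwardOrbit g x), (forwardOrbit g x).inf fun y => (enc y : WithTop ℕ))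

variable {enc : α → ℕ}

theorem orbitKey_le_apply (enc : α → ℕ) (g : α → α) (x : α) :
    orbitKey enc g x ≤ orbitKey enc g (g x) := by
  have hsub : forwardOrbit g (g x) ⊆ forwardOrbit g x :=
    forwardOrbit_subset_of_mem (iterate_mem_forwardOrbit 1)
  exact Prod.Lex.toLex_mono ⟨card_le_card hsub, inf_mono hsub⟩

theorem card_forwardOrbit_eq_of_orbitKey_eq (h : orbitKey enc g x = orbitKey enc g y) :
    #(forwardOrbit g x) = #(forwardOrbit g y) :=
  (Prod.ext_iff.1 (toLex.injective h)).1

theorem mem_periodicPts_of_orbitKey_apply_eq (h : orbitKey enc g (g x) = orbitKey enc g x) :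
    x ∈ periodicPts g := by
  refine mem_periodicPts_of_mem_forwardOrbit_apply ?_
  have hsub : forwardOrbit g (g x) ⊆ forwardOrbit g x :=
    forwardOrbit_subset_of_mem (iterate_mem_forwardOrbit 1)
  rw [Finset.eq_of_subset_of_card_le hsub (card_forwardOrbit_eq_of_orbitKey_eq h).ge]
  exact iterate_mem_forwardOrbit 0

theorem exists_mem_forwardOrbit_inf_eq (enc : α → ℕ) (g : α → α) (x : α) :
    ∃ z ∈ forwardOrbit g x, (forwardOrbit g x).inf (fun y => (enc y : WithTop ℕ)) = enc z :=
  exists_mem_eq_inf _ ⟨x, iterate_mem_forwardOrbit 0⟩ _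

theorem orbitKey_eq_iff_mem_forwardOrbit (henc : Injective enc) (hx : x ∈ periodicPts g) :
    orbitKey enc g y = orbitKey enc g x ↔ y ∈ forwardOrbit g x := by
  refine ⟨fun h => ?_, fun hy => by simp only [orbitKey, forwardOrbit_eq_of_mem hx hy]⟩
  obtain ⟨z, hz, hzx⟩ := exists_mem_forwardOrbit_inf_eq enc g x
  obtain ⟨z', hz', hzy⟩ := exists_mem_forwardOrbit_inf_eq enc g y
  have hz'z : z' = z := henc (WithTop.coe_injective
    (hzy.symm.trans ((Prod.ext_iff.1 (toLex.injective h)).2.trans hzx)))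
  have hsub : forwardOrbit g x ⊆ forwardOrbit g y := by
    rw [← forwardOrbit_eq_of_mem hx hz]
    exact forwardOrbit_subset_of_mem (hz'z ▸ hz')
  rw [Finset.eq_of_subset_of_card_le hsub (card_forwardOrbit_eq_of_orbitKey_eq h).le]
  exact iterate_mem_forwardOrbit 0

theorem mem_cycleReps : x ∈ cycleReps enc g ↔ IsCycleRep enc g x := by
  simp [cycleReps]

theorem exists_mem_cycleReps_orbitKey_eq (hx : x ∈ periodicPts g) (h2 : 2 ≤ minimalPeriod g x) :
    ∃ x₀ ∈ cycleReps enc g, orbitKey enc g x₀ = orbitKey enc g x := by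
  obtain ⟨z, hz, hzx⟩ := exists_mem_forwardOrbit_inf_eq enc g x
  have hfw := forwardOrbit_eq_of_mem hx hz
  obtain ⟨t, rfl⟩ := mem_forwardOrbit.1 hz
  refine ⟨g^[t] x, mem_cycleReps.2 ⟨by rwa [minimalPeriod_apply_iterate hx], fun s => ?_⟩,
    by simp only [orbitKey, hfw]⟩
  have hle := inf_le (f := fun y => (enc y : WithTop ℕ)) (hfw ▸ iterate_mem_forwardOrbit s)
  rw [hzx] at hle
  exact_mod_cast hle

theorem orbitKey_injOn_cycleReps (henc : Injective enc) :
    Set.InjOn (orbitKey enc g) (cycleReps enc g) := by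
  intro x₀ hx₀ x₁ hx₁ h
  rw [mem_coe, mem_cycleReps] at hx₀ hx₁
  obtain ⟨s, rfl⟩ := mem_forwardOrbit.1 ((orbitKey_eq_iff_mem_forwardOrbit henc
    hx₀.mem_periodicPts).1 h.symm)
  obtain ⟨t, ht⟩ := mem_forwardOrbit.1 ((orbitKey_eq_iff_mem_forwardOrbit henc
    hx₁.mem_periodicPts).1 h)
  have hle := hx₁.2 t
  rw [ht] at hle
  exact henc (le_antisymm (hx₀.2 s) hle)

end ForwardOrbit

section Determinant

variable {α R : Type*} [Fintype α] [DecidableEq α] [CommRing R] {enc : α → ℕ} {g : α → α}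

theorem blockTriangular_one_sub_funGraphMatrix (enc : α → ℕ) (g : α → α) (w : α → α → R) :
    (1 - funGraphMatrix g w).BlockTriangular (orbitKey enc g) := by
  intro i j hji
  have hij : i ≠ j := by rintro rfl; exact lt_irrefl _ hji
  have hgi : g i ≠ j := by rintro rfl; exact (orbitKey_le_apply enc g i).not_gt hji
  simp [funGraphMatrix, hij, hgi]

theorem det_toSquareBlock_orbitKey_eq_one {β : Lex (ℕᵒᵈ × WithTop ℕ)}
    (hβ : β ∉ (cycleReps enc g).image (orbitKey enc g)) (w : α → α → R) :
    det ((1 - funGraphMatrix g w).toSquareBlock (orbitKey enc g) β) = 1 := by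
  suffices (1 - funGraphMatrix g w).toSquareBlock (orbitKey enc g) β = 1 by rw [this, det_one]
  ext ⟨i, hi⟩ ⟨j, hj⟩
  suffices ¬(g i = j ∧ i ≠ j) by simp [toSquareBlock_def, funGraphMatrix, one_apply, this]
  rintro ⟨rfl, hij⟩
  have hper := mem_periodicPts_of_orbitKey_apply_eq (hj.trans hi.symm)
  have h2 : 2 ≤ minimalPeriod g i := by
    have := minimalPeriod_pos_of_mem_periodicPts hper
    have : minimalPeriod g i ≠ 1 := fun h1 => hij (minimalPeriod_eq_one_iff_isFixedPt.1 h1).symm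
    omega
  obtain ⟨x₀, hx₀, hkey⟩ := exists_mem_cycleReps_orbitKey_eq (enc := enc) hper h2
  exact hβ (mem_image.2 ⟨x₀, hx₀, hkey.trans hi⟩)

theorem det_toSquareBlock_orbitKey_of_mem_cycleReps (henc : Injective enc) {x : α}
    (hx : x ∈ cycleReps enc g) (w : α → α → R) :
    det ((1 - funGraphMatrix g w).toSquareBlock (orbitKey enc g) (orbitKey enc g x)) =
      1 - pathProd w g x (minimalPeriod g x) := by
  have hper := (mem_cycleReps.1 hx).mem_periodicPts
  set p := minimalPeriod g x
  let f : Fin p → α := fun t => g^[t] x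
  have hf : Injective f := fun s t hst => Fin.ext (iterate_injOn_Iio_minimalPeriod s.2 t.2 hst)
  have hfσ : ∀ i, g (f i) = f (finRotate p i) := by
    intro i
    simp only [f, ← iterate_succ_apply' g, ← iterate_mod_minimalPeriod_eq (n := i + 1)]
    congr 2
    simp [p, finRotate_apply, Fin.val_add]
  have hsurj : ∀ y : {y // orbitKey enc g y = orbitKey enc g x}, ∃ t, f t = y := by
    rintro ⟨y, hy⟩
    obtain ⟨t, rfl⟩ := mem_forwardOrbit.1 ((orbitKey_eq_iff_mem_forwardOrbit henc hper).1 hy)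
    exact ⟨⟨t % p, Nat.mod_lt _ (minimalPeriod_pos_of_mem_periodicPts hper)⟩,
      iterate_mod_minimalPeriod_eq⟩
  let e : Fin p ≃ {y // orbitKey enc g y = orbitKey enc g x} := Equiv.ofBijective
    (fun t => ⟨f t, (orbitKey_eq_iff_mem_forwardOrbit henc hper).2 (iterate_mem_forwardOrbit _)⟩)
    ⟨fun s t hst => hf (congrArg Subtype.val hst),
      fun y => (hsurj y).imp fun t ht => Subtype.ext ht⟩
  rw [← det_submatrix_equiv_self e, toSquareBlock_def]
  change det ((1 - funGraphMatrix g w).submatrix f f) = _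
  rw [submatrix_sub, Pi.sub_apply, Pi.sub_apply, submatrix_one _ hf,
    funGraphMatrix_submatrix hf hfσ, det_one_sub_funGraphMatrix_finRotate (mem_cycleReps.1 hx).1,
    pathProd_eq_prod_range, ← Fin.prod_univ_eq_prod_range]
  refine congrArg _ (prod_congr rfl fun i _ => ?_)
  rw [← hfσ, iterate_succ_apply']

theorem det_one_sub_funGraphMatrix (henc : Injective enc) (g : α → α) (w : α → α → R) :
    det (1 - funGraphMatrix g w) =
      ∏ x ∈ cycleReps enc g, (1 - pathProd w g x (minimalPeriod g x)) := by
  rw [(blockTriangular_one_sub_funGraphMatrix enc g w).det, ← prod_subset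
    (image_subset_image (subset_univ _)) fun β _ hβ => det_toSquareBlock_orbitKey_eq_one hβ w,
    prod_image (orbitKey_injOn_cycleReps henc)]
  exact prod_congr rfl fun x hx => det_toSquareBlock_orbitKey_of_mem_cycleReps henc hx w

end Determinant

section Laplacian

variable {α β R : Type*} [Fintype α] [DecidableEq α] [DecidableEq β] [CommRing R]

theorem laplacian_submatrix_apply {ι : β → α} (hι : Injective ι) (a h : α → α → R) (i j : β) :
    (of fun i j => if i = j then ∑ k ∈ univ.filter fun k => k ≠ i, a i k
        else -(h i j * a i j)).submatrix ι ι i j =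
      ∑ k : {k // k ≠ ι i},
        a (ι i) k * ((if i = j then 1 else 0) - if (k : α) = ι j then h (ι i) (ι j) else 0) := by
  rw [← sum_subtype (univ.filter (· ≠ ι i)) (by simp)
    (fun k => a (ι i) k * ((if i = j then 1 else 0) - if k = ι j then h (ι i) (ι j) else 0))]
  simp only [submatrix_apply, of_apply, hι.eq_iff, mul_sub, sum_sub_distrib, mul_ite, mul_one,
    mul_zero]
  split_ifs with hij
  · subst hij
    simp
  · simp [sum_ite_eq', Ne.symm (hι.ne hij), mul_comm]

theorem det_laplacian_submatrix [Fintype β] {ι : β → α}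
    (hι : Injective ι) (a h : α → α → R) :
    det ((of fun i j => if i = j then ∑ k ∈ univ.filter fun k => k ≠ i, a i k
        else -(h i j * a i j)).submatrix ι ι) =
      ∑ f : (∀ i, {k // k ≠ ι i}), (∏ i, a (ι i) (f i)) *
        det (1 - of fun i j => if (f i : α) = ι j then h (ι i) (ι j) else 0) := by
  let v : ∀ i, {k // k ≠ ι i} → β → R := fun i k j =>
    a (ι i) k * ((if i = j then 1 else 0) - if (k : α) = ι j then h (ι i) (ι j) else 0)
  calc _ = detRowAlternating fun i => ∑ k, v i k := by
        congr 1; ext i j; simp only [v, laplacian_submatrix_apply hι, Finset.sum_apply]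
    _ = ∑ f : (∀ i, {k // k ≠ ι i}), det (of fun i j => v i (f i) j) :=
        (detRowAlternating (n := β) (R := R)).toMultilinearMap.map_sum v
    _ = _ := sum_congr rfl fun f _ => by
        rw [← det_mul_column]
        congr 1

theorem det_submatrix_one_sub_funGraphMatrix [Fintype β] {ι : β → α} (hι : Injective ι) {g : α → α}
    (hg : ∀ x ∉ Set.range ι, g x = x) (w : α → α → R) :
    det ((1 - funGraphMatrix g w).submatrix ι ι) = det (1 - funGraphMatrix g w) := by
  classical
  set M := 1 - funGraphMatrix g w
  have hfix : ∀ x ∉ Set.range ι, ∀ y, M x y = if x = y then 1 else 0 := by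
    intro x hx y
    simp [M, funGraphMatrix, one_apply, hg x hx]
  have hwell : M.toSquareBlockProp (· ∉ Set.range ι) = 1 := by
    ext ⟨x, hx⟩ ⟨y, hy⟩
    simp [toSquareBlockProp, toBlock, hfix x hx, one_apply]
  rw [twoBlockTriangular_det M (· ∈ Set.range ι) fun x hx y hy => by
      rw [hfix x hx, if_neg (ne_of_mem_of_not_mem hy hx).symm],
    hwell, det_one, mul_one]
  convert det_submatrix_equiv_self (Equiv.ofInjective ι hι)
    (M.toSquareBlockProp fun x => x ∈ Set.range ι)
  rfl

end Laplacian

theorem extFun_castLE {n m : ℕ} (hmn : m ≤ n) (f : Fin m → Fin n) (i : Fin m) :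
    extFun hmn f (Fin.castLE hmn i) = f i :=
  dif_pos i.isLt

theorem extFun_of_notMem_range {n m : ℕ} (hmn : m ≤ n) (f : Fin m → Fin n) (x : Fin n)
    (hx : x ∉ Set.range (Fin.castLE hmn)) : extFun hmn f x = x :=
  dif_neg fun hxm => hx ⟨⟨x, hxm⟩, rfl⟩

theorem stmt7_general (n m : ℕ) (hmn : m ≤ n)
    (a : Fin n → Fin n → ℂ) (h : Fin n → Fin n → ℂ) :
    Matrix.det
      ((Matrix.of fun i j : Fin n =>
          if i = j then ∑ k ∈ Finset.univ.filter fun k => k ≠ i, a i k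
          else - (h i j * a i j)).submatrix (Fin.castLE hmn) (Fin.castLE hmn)) =
    ∑ f : {f : Fin m → Fin n // ∀ i, f i ≠ Fin.castLE hmn i},
      (∏ i : Fin m, a (Fin.castLE hmn i) (f.1 i)) *
        ∏ x ∈ cycleReps Fin.val (extFun hmn f.1),
          (1 - pathProd h (extFun hmn f.1) x (minimalPeriod (extFun hmn f.1) x)) := by
  rw [det_laplacian_submatrix (Fin.castLE_injective hmn)]
  refine (Fintype.sum_equiv Equiv.subtypePiEquivPi _ _ fun f => ?_).symm
  have hext : ∀ i, extFun hmn f.1 (Fin.castLE hmn i) ≠ Fin.castLE hmn i := fun i => by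
    rw [extFun_castLE]; exact f.2 i
  rw [← det_one_sub_funGraphMatrix Fin.val_injective, ← det_submatrix_one_sub_funGraphMatrix
    (Fin.castLE_injective hmn) (extFun_of_notMem_range hmn f.1),
    submatrix_one_sub_funGraphMatrix (Fin.castLE_injective hmn) hext]
  simp only [extFun_castLE]
  rfl

theorem stmt7 (n m : ℕ) (hn : 2 ≤ n) (hm : 1 ≤ m) (hmn : m ≤ n)
    (a : Fin n → Fin n → ℂ) (h : Fin n → Fin n → ℂ) :
    Matrix.det
      ((Matrix.of fun i j : Fin n =>
          if i = j then ∑ k ∈ Finset.univ.filter fun k => k ≠ i, a i k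
          else - (h i j * a i j)).submatrix (Fin.castLE hmn) (Fin.castLE hmn)) =
    ∑ f : {f : Fin m → Fin n // ∀ i, f i ≠ Fin.castLE hmn i},
      (∏ i : Fin m, a (Fin.castLE hmn i) (f.1 i)) *
        ∏ x ∈ cycleReps Fin.val (extFun hmn f.1),
          (1 - pathProd h (extFun hmn f.1) x (minimalPeriod (extFun hmn f.1) x)) :=
  stmt7_general n m hmn a h
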